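/- arXiv:1702.08671 — 5 statements merged into one kernel-verified Lean document; each statement's English description precedes it below -/
import Mathlib

section
/- Let A, B be positive bounded linear operators on a complex Hilbert space H such that AB is normal. Then AB ≥ 0. -/
open scoped ComplexOrder

section CStarAlgebra

variable {A : Type*} [CStarAlgebra A] [PartialOrder A] [StarOrderedRing A]

lemma spectrum_mul_nonneg_of_nonneg {a b : A} (ha : 0 ≤ a) (hb : 0 ≤ b) :
    ∀ z ∈ spectrum ℂ (a * b), 0 ≤ z := by
  intro z hz
  rcases eq_or_ne z 0 with rfl | hz0
  · exact le_rfl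
  -- `a * b = √a * (√a * b)` has the same nonzero spectrum as the positive `√a * b * √a`.
  set s := CFC.sqrt a
  have hs : IsSelfAdjoint s := (CFC.sqrt_nonneg a).isSelfAdjoint
  have hsbs : 0 ≤ s * b * s := by
    simpa only [hs.star_eq] using star_left_conjugate_nonneg hb s
  have hz_sqrt : z ∈ spectrum ℂ (s * (s * b)) := by
    rwa [← mul_assoc, CFC.sqrt_mul_sqrt_self a ha]
  have hz_conj : z ∈ spectrum ℂ (s * b * s) :=
    ((spectrum.nonzero_mul_comm s (s * b)).subset ⟨hz_sqrt, hz0⟩).1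
  exact spectrum_nonneg_of_nonneg hsbs hz_conj

lemma IsStarNormal.mul_nonneg_of_nonneg {a b : A} (ha : 0 ≤ a) (hb : 0 ≤ b)
    (hab : IsStarNormal (a * b)) : 0 ≤ a * b :=
  (StarOrderedRing.nonneg_iff_spectrum_nonneg (R := ℂ) _ hab).mpr
    (spectrum_mul_nonneg_of_nonneg ha hb)

end CStarAlgebra

variable {H : Type*} [NormedAddCommGroup H] [InnerProductSpace ℂ H] [CompleteSpace H]

theorem mul_nonneg_of_nonneg_of_nonneg_of_normal_mul (A B : H →L[ℂ] H)
    (hA : 0 ≤ A) (hB : 0 ≤ B) (hAB : IsStarNormal (A * B)) :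
    0 ≤ A * B :=
  hAB.mul_nonneg_of_nonneg hA hB
end

section
/- Let A, B be normal bounded linear operators on a complex Hilbert space H with AB = BA. Then |AB| = |A*B| = |AB*| = |A*B*| = |B*A*| = |B*A| = |BA*| = |BA|. -/
/-!
By the Fuglede–Putnam theorem, `A*` commutes with `B` as well as `A`, so `|A|² = A*A` commutes
with `B` and `B*`, and symmetrically. Hence for `X ∈ {A, A*}` and `Y ∈ {B, B*}` one gets
`(XY)*(XY) = Y*(X*X)Y = |B|²|A|²`, and likewise `(YX)*(YX) = |A|²|B|²`, using `X*X = A*A` by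
normality. All eight products thus have the same `T*T`, hence the same square root.
-/

variable {H : Type*} [NormedAddCommGroup H] [InnerProductSpace ℂ H] [CompleteSpace H]

/-- The absolute value (modulus) of a bounded operator: `|A| = √(A* A)`. -/
noncomputable def ContinuousLinearMap.abs (A : H →L[ℂ] H) : H →L[ℂ] H :=
  CFC.sqrt (star A * A)

lemma star_mul_mul_self_of_commute {R : Type*} [Semigroup R] [StarMul R] {x y : R}
    (h : Commute (star x * x) y) : star (x * y) * (x * y) = star y * y * (star x * x) := by
  rw [star_mul, mul_assoc, ← mul_assoc (star x), h.eq, ← mul_assoc]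

lemma star_star_mul_star_eq_star_mul_self {R : Type*} [Mul R] [InvolutiveStar R] (x : R)
    [IsStarNormal x] : star (star x) * star x = star x * x := by
  rw [star_star, star_comm_self']

lemma IsStarNormal.commute_star_mul_self {A : Type*} [NonUnitalCStarAlgebra A] {a x : A}
    (ha : IsStarNormal a) (h : Commute a x) : Commute (star a * a) x :=
  (ha.commute_star_left h).mul_left h

theorem abs_products_eq_of_commute_of_normal (A B : H →L[ℂ] H)
    (hcomm : A * B = B * A) (hA : IsStarNormal A) (hB : IsStarNormal B) :
    (A * B).abs = (star A * B).abs ∧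
    (A * B).abs = (A * star B).abs ∧
    (A * B).abs = (star A * star B).abs ∧
    (A * B).abs = (star B * star A).abs ∧
    (A * B).abs = (star B * A).abs ∧
    (A * B).abs = (B * star A).abs ∧
    (A * B).abs = (B * A).abs := by
  have hAB : Commute A B := hcomm
  have hAAB := hA.commute_star_mul_self hAB
  have hAAB' := hA.commute_star_mul_self (hB.commute_star_right hAB)
  have hBBA := hB.commute_star_mul_self hAB.symm
  have hBBA' := hB.commute_star_mul_self (hA.commute_star_right hAB.symm)
  have hAABB : Commute (star A * A) (star B * B) := hAAB'.mul_right hAAB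
  simp only [ContinuousLinearMap.abs, star_mul_mul_self_of_commute, hAAB, hAAB', hBBA, hBBA',
    star_star_mul_star_eq_star_mul_self, hAABB.eq, and_self]
end

section
/- Let A, B be bounded linear operators on a complex Hilbert space H with AB = BA. If A is normal and B is invertible, then |AB⁻¹| = |A||B⁻¹|. -/
variable {H : Type*} [NormedAddCommGroup H] [InnerProductSpace ℂ H] [CompleteSpace H]

/-- By Fuglede's theorem `b` also commutes with `star a`, which is what `Commute.cfcAbs_mul_eq`
needs. -/
lemma IsStarNormal.cfcAbs_mul_of_commute {A : Type*} [NonUnitalCStarAlgebra A] [PartialOrder A]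
    [StarOrderedRing A] {a b : A} (ha : IsStarNormal a) (hab : Commute a b) :
    CFC.abs (a * b) = CFC.abs a * CFC.abs b :=
  hab.cfcAbs_mul_eq <| by simpa using (ha.commute_star_left hab).star_star

theorem abs_mul_inv_of_commute_of_normal (A : H →L[ℂ] H) (B : (H →L[ℂ] H)ˣ)
    (hcomm : A * (B : H →L[ℂ] H) = (B : H →L[ℂ] H) * A) (hA : IsStarNormal A) :
    (A * ((B⁻¹ : (H →L[ℂ] H)ˣ) : H →L[ℂ] H)).abs
      = A.abs * ((B⁻¹ : (H →L[ℂ] H)ˣ) : H →L[ℂ] H).abs :=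
  -- `ContinuousLinearMap.abs` unfolds to Mathlib's `CFC.abs`.
  hA.cfcAbs_mul_of_commute (Commute.units_inv_right hcomm)
end

section
/- Let A₁, ..., Aₙ be pairwise commuting bounded linear operators on a complex Hilbert space H such that all of them, except possibly Aₙ, are normal. Then |A₁A₂⋯Aₙ| = |A₁||A₂|⋯|Aₙ|. -/
/-!
By Fuglede's theorem a normal `a` commuting with `b` also commutes with `star b`, so
`star (a * b) * (a * b) = (star a * a) * (star b * b)` is a product of commuting positive elements,
whose square root is `|a| * |b|`. Peeling off the normal factors one at a time gives the theorem.
-/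

namespace CFC

theorem abs_mul_of_isStarNormal_left {A : Type*} [NonUnitalCStarAlgebra A] [PartialOrder A]
    [StarOrderedRing A] {a b : A} (ha : IsStarNormal a) (h : Commute a b) :
    abs (a * b) = abs a * abs b :=
  h.cfcAbs_mul_eq <| by simpa using (ha.commute_star_left h).star_star

theorem abs_list_prod_mul {A : Type*} [CStarAlgebra A] [PartialOrder A] [StarOrderedRing A]
    {l : List A} {b : A} (hl : l.Pairwise Commute)
    (hnormal : ∀ x ∈ l, IsStarNormal x) (hb : ∀ x ∈ l, Commute x b) :
    abs (l.prod * b) = (l.map abs).prod * abs b := by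
  induction l with
  | nil => simp
  | cons x l ih =>
    rw [List.pairwise_cons] at hl
    have hx : Commute x (l.prod * b) :=
      (Commute.list_prod_right _ _ hl.1).mul_right (hb x List.mem_cons_self)
    rw [List.prod_cons, mul_assoc, abs_mul_of_isStarNormal_left (hnormal x List.mem_cons_self) hx,
      ih hl.2 (fun y hy => hnormal y (List.mem_cons_of_mem x hy))
        (fun y hy => hb y (List.mem_cons_of_mem x hy)), List.map_cons, List.prod_cons, mul_assoc]

end CFC

variable {H : Type*} [NormedAddCommGroup H] [InnerProductSpace ℂ H] [CompleteSpace H]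

theorem abs_list_prod_of_commute_of_normal (n : ℕ) (A : Fin (n + 1) → H →L[ℂ] H)
    (hcomm : ∀ i j, A i * A j = A j * A i)
    (hnormal : ∀ i : Fin (n + 1), i ≠ Fin.last n → IsStarNormal (A i)) :
    (List.ofFn A).prod.abs = (List.ofFn fun i => (A i).abs).prod := by
  have key := CFC.abs_list_prod_mul (l := List.ofFn fun i => A i.castSucc) (b := A (Fin.last n))
    (List.pairwise_ofFn.2 fun i j _ => hcomm _ _)
    (List.forall_mem_ofFn_iff.2 fun i => hnormal _ (Fin.castSucc_lt_last i).ne)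
    (List.forall_mem_ofFn_iff.2 fun i => hcomm _ _)
  rw [List.map_ofFn] at key
  -- `ContinuousLinearMap.abs` unfolds to `CFC.abs`, so `key` closes the goal up to defeq.
  rwa [List.ofFn_succ', List.ofFn_succ', List.prod_concat, List.prod_concat]
end

section
/- Let A, B be bounded linear operators on a complex Hilbert space H with AB = BA. If A is normal and B is hyponormal, then A*B is hyponormal. -/
/-! Normality of `A` and `AB = BA` turn `(A*B)*(A*B)` into `A*(B*B)A`, while `(A*B)(A*B)* = A*(BB*)A`,
so hyponormality of `A*B` is the conjugate by `A` of that of `B`. -/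

variable {H : Type*} [NormedAddCommGroup H] [InnerProductSpace ℂ H] [CompleteSpace H]

/-- A bounded operator `T` is hyponormal if `T T* ≤ T* T` in the Loewner order. -/
def ContinuousLinearMap.Hyponormal (T : H →L[ℂ] H) : Prop :=
  T * star T ≤ star T * T

theorem IsStarNormal.star_mul_self_star_mul {R : Type*} [Semigroup R] [StarMul R]
    {a b : R} (ha : IsStarNormal a) (hab : Commute a b) :
    star (star a * b) * (star a * b) = star a * (star b * b) * a := by
  calc star (star a * b) * (star a * b) = star b * (a * star a) * b := by
        simp only [star_mul, star_star, mul_assoc]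
    _ = star (a * b) * (a * b) := by
        rw [← ha.star_comm_self.eq, star_mul]; simp only [mul_assoc]
    _ = star a * (star b * b) * a := by
        rw [hab.eq, star_mul]; simp only [mul_assoc]

theorem IsStarNormal.mul_star_self_le_star_mul_self_star_mul {R : Type*} [NonUnitalSemiring R]
    [PartialOrder R] [StarRing R] [StarOrderedRing R] {a b : R} (ha : IsStarNormal a)
    (hab : Commute a b) (hb : b * star b ≤ star b * b) :
    star a * b * star (star a * b) ≤ star (star a * b) * (star a * b) := by
  rw [ha.star_mul_self_star_mul hab, star_mul, star_star, ← mul_assoc, mul_assoc _ b]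
  exact star_left_conjugate_le_conjugate hb a

theorem hyponormal_adjoint_mul_of_commute (A B : H →L[ℂ] H)
    (hcomm : A * B = B * A) (hA : IsStarNormal A) (hB : B.Hyponormal) :
    (star A * B).Hyponormal :=
  hA.mul_star_self_le_star_mul_self_star_mul hcomm hB
end
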